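/- Let f : ℤ → ℝ be a function and let a ∈ ℤ₊. Let μ > 0 be non-integer with m − 1 < μ < m, where m = ⌈μ⌉, and let p ∈ ℕ with μ > p. Assume additionally that ∇^k f(a) = 0 for k = p, p+1, ..., m−1. Then for all t ∈ ℕ with t ≥ a + m: ∇^p f(t) = (1/Γ(μ−p)) · Σ_{τ=a+1}^{t} (t−τ+1)^{↑(μ−p−1)} · ∇_{(a+1)*}^{μ} f(τ). -/

import Mathlib

/-!
The kernel `(n+1)^{↑(ν-1)}/Γ(ν)` of the nabla fractional sum of order `ν > 0` is the
multiset coefficient `ν^{↑n}/n!`, so by the Chu–Vandermonde identity fractional sums compose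
additively:
`∇^{-(μ-p)} ∇^{-(m-μ)} = ∇^{-(m-p)}`. The right-hand side is therefore the integer-order sum
`∇_{a+1}^{-(m-p)} ∇^{m-p} (∇^p f)`, and this returns `∇^p f`: each factor
`∇_{a+1}^{-1} ∇` telescopes to `g t - g a`, and the vanishing differences `∇^k f (a) = 0`
kill the `g a` terms.
-/

open Finset

/-- Backward (nabla) difference: `∇f(t) = f(t) - f(t-1)`. -/
def nabla (f : ℤ → ℝ) : ℤ → ℝ := fun t => f t - f (t - 1)

/-- Rising factorial `t^{↑α} = Γ(t+α)/Γ(t)`. -/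
noncomputable def risingFac (t α : ℝ) : ℝ := Real.Gamma (t + α) / Real.Gamma t

/-- The `ν`-th order nabla fractional sum `∇_a^{-ν} f (t) = Σ_{s=a}^{t} (t-s+1)^{↑(ν-1)}/Γ(ν) · f(s)`. -/
noncomputable def fracSum (ν : ℝ) (a : ℤ) (f : ℤ → ℝ) : ℤ → ℝ := fun t =>
  ∑ s ∈ Finset.Icc a t, risingFac ((t - s + 1 : ℤ) : ℝ) (ν - 1) / Real.Gamma ν * f s

/-- Caputo-like nabla fractional difference `∇_{a*}^{μ} f = ∇_a^{-(m-μ)} (∇^m f)`, `m = ⌈μ⌉`. -/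
noncomputable def caputoNabla (μ : ℝ) (a : ℤ) (f : ℤ → ℝ) : ℤ → ℝ :=
  fracSum ((⌈μ⌉₊ : ℝ) - μ) a (nabla^[⌈μ⌉₊] f)

theorem Ring.multichoose_eq_negOnePow_smul_choose_neg {R : Type*} [CommRing R]
    [BinomialRing R] (r : R) (n : ℕ) :
    Ring.multichoose r n = Int.negOnePow n • Ring.choose (-r) n := by
  rw [Ring.choose_neg', smul_smul, Int.units_mul_self, one_smul]

theorem Ring.multichoose_add {R : Type*} [CommRing R] [BinomialRing R] (r s : R) (k : ℕ) :
    Ring.multichoose (r + s) k =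
      ∑ ij ∈ antidiagonal k, Ring.multichoose r ij.1 * Ring.multichoose s ij.2 := by
  rw [Ring.multichoose_eq_negOnePow_smul_choose_neg, neg_add,
    Ring.add_choose_eq k (Commute.all _ _), smul_sum]
  refine sum_congr rfl fun ij hij => ?_
  rw [← mem_antidiagonal.mp hij, Ring.multichoose_eq_negOnePow_smul_choose_neg,
    Ring.multichoose_eq_negOnePow_smul_choose_neg, smul_mul_smul_comm, Nat.cast_add,
    Int.negOnePow_add]

theorem Real.Gamma_add_nat_eq_ascPochhammer_mul {x : ℝ} (hx : 0 < x) (n : ℕ) :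
    Real.Gamma (x + n) = (ascPochhammer ℝ n).eval x * Real.Gamma x := by
  induction n with
  | zero => simp
  | succ n ih =>
    rw [Nat.cast_succ, ← add_assoc, Real.Gamma_add_one (by positivity), ih,
      ascPochhammer_succ_right]
    simp only [Polynomial.eval_mul, Polynomial.eval_add, Polynomial.eval_X, Polynomial.eval_natCast]
    ring

theorem Ring.multichoose_eq_ascPochhammer_eval_div_factorial {K : Type*} [Field K] [CharZero K]
    (x : K) (n : ℕ) : Ring.multichoose x n = (ascPochhammer K n).eval x / n.factorial := by
  rw [eq_div_iff (Nat.cast_ne_zero.mpr n.factorial_ne_zero), mul_comm, ← nsmul_eq_mul,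
    Ring.factorial_nsmul_multichoose_eq_ascPochhammer, Polynomial.ascPochhammer_smeval_eq_eval]

theorem risingFac_div_Gamma {x : ℝ} (hx : 0 < x) (n : ℕ) :
    risingFac ((n : ℝ) + 1) (x - 1) / Real.Gamma x = Ring.multichoose x n := by
  rw [risingFac, show (n : ℝ) + 1 + (x - 1) = x + n by ring,
    Real.Gamma_add_nat_eq_ascPochhammer_mul hx, Real.Gamma_nat_eq_factorial,
    Ring.multichoose_eq_ascPochhammer_eval_div_factorial]
  field_simp [(Real.Gamma_pos_of_pos hx).ne']

theorem sum_Icc_eq_sum_antidiagonal {M : Type*} [AddCommMonoid M] {s t : ℤ} (h : s ≤ t)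
    (F : ℕ → ℕ → M) :
    ∑ τ ∈ Icc s t, F (t - τ).toNat (τ - s).toNat =
      ∑ ij ∈ antidiagonal (t - s).toNat, F ij.1 ij.2 := by
  refine sum_nbij' (fun τ => ((t - τ).toNat, (τ - s).toNat)) (fun ij => t - ij.1)
    ?_ ?_ ?_ ?_ fun _ _ => rfl
  · intro τ hτ
    rw [mem_Icc] at hτ
    rw [HasAntidiagonal.mem_antidiagonal]
    omega
  · intro ij hij
    rw [HasAntidiagonal.mem_antidiagonal] at hij
    rw [mem_Icc]
    omega
  · intro τ hτ
    rw [mem_Icc] at hτ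
    omega
  · intro ij hij
    rw [HasAntidiagonal.mem_antidiagonal] at hij
    ext <;> simp only <;> omega

/-- `fracSum` with its kernel `(t-s+1)^{↑(x-1)}/Γ(x)` written as `x^{↑(t-s)}/(t-s)!`; in this
form it also makes sense for `x = 0`, where it is the identity. -/
noncomputable def nablaSum (x : ℝ) (a : ℤ) (g : ℤ → ℝ) (t : ℤ) : ℝ :=
  ∑ s ∈ Icc a t, Ring.multichoose x (t - s).toNat * g s

theorem fracSum_eq_nablaSum {ν : ℝ} (hν : 0 < ν) (a : ℤ) (g : ℤ → ℝ) :
    fracSum ν a g = nablaSum ν a g := by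
  ext t
  refine sum_congr rfl fun s hs => ?_
  have hst : ((t - s + 1 : ℤ) : ℝ) = ((t - s).toNat : ℕ) + 1 := by
    rw [Int.cast_add, Int.cast_one, ← Int.cast_natCast, Int.toNat_of_nonneg (by grind)]
  rw [hst, ← risingFac_div_Gamma hν]

theorem nablaSum_congr {x : ℝ} {a t : ℤ} {g g' : ℤ → ℝ}
    (h : ∀ s ∈ Icc a t, g s = g' s) : nablaSum x a g t = nablaSum x a g' t :=
  sum_congr rfl fun s hs => by rw [h s hs]

theorem nablaSum_nablaSum (x y : ℝ) (a : ℤ) (g : ℤ → ℝ) (t : ℤ) :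
    nablaSum x a (nablaSum y a g) t = nablaSum (x + y) a g t := by
  simp only [nablaSum, mul_sum]
  rw [sum_comm' (t' := Icc a t) (s' := fun s => Icc s t)
    (by intro τ s; simp only [mem_Icc]; omega)]
  refine sum_congr rfl fun s hs => ?_
  rw [Ring.multichoose_add, sum_mul, ← sum_Icc_eq_sum_antidiagonal (mem_Icc.mp hs).2
    fun i j => Ring.multichoose x i * Ring.multichoose y j * g s]
  exact sum_congr rfl fun τ _ => by ring

theorem nablaSum_zero_left {a t : ℤ} (h : a ≤ t) (g : ℤ → ℝ) :
    nablaSum 0 a g t = g t := by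
  rw [nablaSum, sum_eq_single_of_mem t (mem_Icc.mpr ⟨h, le_rfl⟩) fun s hs hst => ?_, sub_self,
    Int.toNat_zero, Ring.multichoose_zero_right, one_mul]
  obtain ⟨k, hk⟩ : ∃ k, (t - s).toNat = k + 1 := ⟨(t - s).toNat - 1, by grind⟩
  rw [hk, Ring.multichoose_zero_succ, zero_mul]

theorem nablaSum_one_nabla (g : ℤ → ℝ) {a t : ℤ} (h : a ≤ t) :
    nablaSum 1 (a + 1) (nabla g) t = g t - g a := by
  simp only [nablaSum, Ring.multichoose_one, one_mul]
  induction t, h using Int.leInduction with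
  | base => simp
  | succ t _ ih =>
    rw [← insert_Icc_right_eq_Icc_add_one (by omega), sum_insert (by simp), ih, nabla,
      add_sub_cancel_right]
    ring

theorem nablaSum_natCast_iterate_nabla {g : ℤ → ℝ} {a t : ℤ} (h : a < t) (q : ℕ)
    (hg : ∀ j < q, nabla^[j] g a = 0) : nablaSum q (a + 1) (nabla^[q] g) t = g t := by
  induction q with
  | zero => rw [Nat.cast_zero]; exact nablaSum_zero_left h g
  | succ q ih =>
    have hsum : ∀ s ∈ Icc (a + 1) t,
        nablaSum 1 (a + 1) (nabla^[q + 1] g) s = nabla^[q] g s := by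
      intro s hs
      rw [Function.iterate_succ_apply', nablaSum_one_nabla _ (by grind), hg q (by omega), sub_zero]
    rw [Nat.cast_succ, ← nablaSum_nablaSum, nablaSum_congr hsum, ih fun j hj => hg j (by omega)]

theorem discrete_nabla_fractional_taylor_extended_of_deriv_zero_general
    (f : ℤ → ℝ) (a : ℕ) (μ : ℝ)
    (m : ℕ) (hm : m = ⌈μ⌉₊) (hm2 : μ < m)
    (p : ℕ) (hp : (p : ℝ) < μ)
    (hf0 : ∀ k, p ≤ k → k ≤ m - 1 → nabla^[k] f a = 0)
    (t : ℤ) (ht : (a : ℤ) + m ≤ t) :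
    nabla^[p] f t =
      (1 / Real.Gamma (μ - p)) * ∑ τ ∈ Finset.Icc ((a : ℤ) + 1) t,
        risingFac ((t - τ + 1 : ℤ) : ℝ) (μ - p - 1) * caputoNabla μ ((a : ℤ) + 1) f τ := by
  have hpm : p < m := by exact_mod_cast hp.trans hm2
  have hcaputo :
      caputoNabla μ (a + 1) f = nablaSum (m - μ) (a + 1) (nabla^[m - p] (nabla^[p] f)) := by
    rw [caputoNabla, ← hm, fracSum_eq_nablaSum (by linarith), ← Function.iterate_add_apply,
      Nat.sub_add_cancel hpm.le]
  have hinit : ∀ j < m - p, nabla^[j] (nabla^[p] f) a = 0 := fun j hj => by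
    rw [← Function.iterate_add_apply]
    exact hf0 _ (by omega) (by omega)
  have horder : μ - p + (m - μ) = ((m - p : ℕ) : ℝ) := by push_cast [hpm.le]; ring
  calc nabla^[p] f t = nablaSum ((m - p : ℕ) : ℝ) (a + 1) (nabla^[m - p] (nabla^[p] f)) t :=
        (nablaSum_natCast_iterate_nabla (by omega) _ hinit).symm
    _ = fracSum (μ - p) (a + 1) (caputoNabla μ (a + 1) f) t := by
        rw [fracSum_eq_nablaSum (by linarith), hcaputo, nablaSum_nablaSum, horder]
    _ = _ := by
        simp only [fracSum, mul_sum]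
        exact sum_congr rfl fun τ _ => by ring

/-- Extended discrete backward fractional Taylor formula, vanishing differences case. -/
theorem discrete_nabla_fractional_taylor_extended_of_deriv_zero
    (f : ℤ → ℝ) (a : ℕ) (μ : ℝ) (hμ : 0 < μ) (hμint : ∀ n : ℤ, μ ≠ n)
    (m : ℕ) (hm : m = ⌈μ⌉₊) (hm1 : (m : ℝ) - 1 < μ) (hm2 : μ < m)
    (p : ℕ) (hp : (p : ℝ) < μ)
    (hf0 : ∀ k, p ≤ k → k ≤ m - 1 → nabla^[k] f a = 0)
    (t : ℤ) (ht : (a : ℤ) + m ≤ t) :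
    nabla^[p] f t =
      (1 / Real.Gamma (μ - p)) * ∑ τ ∈ Finset.Icc ((a : ℤ) + 1) t,
        risingFac ((t - τ + 1 : ℤ) : ℝ) (μ - p - 1) * caputoNabla μ ((a : ℤ) + 1) f τ :=
  discrete_nabla_fractional_taylor_extended_of_deriv_zero_general f a μ m hm hm2 p hp hf0 t ht
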